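/- arXiv:1211.5010 — 3 statements merged into one kernel-verified Lean document; each statement's English description precedes it below -/
import Mathlib

section
/- Let p_n(z) = 1 − z − (1−z)^{1+1/n} (using the principal branch) on the closed unit disk. Then the supremum norm ‖p_n‖ over the closed unit disk tends to 0 as n → ∞. -/
open Filter Topology

/-- Pointwise uniform estimate: eventually in `n`, for every `w` with `‖w‖ ≤ 2`,
`‖w - w ^ (1 + 1/n)‖ ≤ ε/2`. -/
lemma stmt_6_key (ε : ℝ) (hε : 0 < ε) :
    ∀ᶠ n : ℕ in atTop, ∀ w : ℂ, ‖w‖ ≤ 2 →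
      ‖w - w ^ ((1 : ℂ) + (n : ℂ)⁻¹)‖ ≤ ε / 2 := by
  set δ : ℝ := min (ε / 4) 1 with hδdef
  have hδpos : 0 < δ := lt_min (by linarith) one_pos
  have hδ1 : δ ≤ 1 := min_le_right _ _
  have hδε : δ ≤ ε / 4 := min_le_left _ _
  set L : ℝ := |Real.log δ| + Real.log 2 + Real.pi + 1 with hLdef
  have hL0 : 0 < L := by
    have := abs_nonneg (Real.log δ)
    have := Real.log_nonneg (by norm_num : (1:ℝ) ≤ 2)
    have := Real.pi_pos
    linarith
  filter_upwards [eventually_ge_atTop ⌈max L (8 * L / ε)⌉₊, eventually_ge_atTop 1]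
    with n hn hn1 w hw2
  have hnL : L ≤ (n : ℝ) := le_trans (le_max_left _ _) (by exact_mod_cast Nat.ceil_le.mp hn)
  have hnε : 8 * L / ε ≤ (n : ℝ) :=
    le_trans (le_max_right _ _) (by exact_mod_cast Nat.ceil_le.mp hn)
  have hnpos : (0 : ℝ) < n := lt_of_lt_of_le hL0 hnL
  have hninv : (0 : ℝ) ≤ (n : ℝ)⁻¹ := inv_nonneg.mpr hnpos.le
  have hexp : (1 : ℂ) + (n : ℂ)⁻¹ = (((1 : ℝ) + (n : ℝ)⁻¹ : ℝ) : ℂ) := by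
    push_cast; ring
  have hexpne : (1 : ℂ) + (n : ℂ)⁻¹ ≠ 0 := by
    rw [hexp]
    exact_mod_cast (by positivity : (1 : ℝ) + (n : ℝ)⁻¹ ≠ 0)
  by_cases hw0 : w = 0
  · subst hw0
    rw [Complex.zero_cpow hexpne]
    simp [le_div_iff₀]; linarith
  by_cases hsmall : ‖w‖ ≤ δ
  · -- small case
    have habs : ‖w ^ ((1 : ℂ) + (n : ℂ)⁻¹)‖ = ‖w‖ ^ ((1 : ℝ) + (n : ℝ)⁻¹) := by
      rw [Complex.norm_cpow_of_ne_zero hw0, hexp]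
      simp
    have hle : ‖w‖ ^ ((1 : ℝ) + (n : ℝ)⁻¹) ≤ ‖w‖ := by
      have h1 : ‖w‖ ^ ((1 : ℝ) + (n : ℝ)⁻¹) ≤ ‖w‖ ^ (1 : ℝ) :=
        Real.rpow_le_rpow_of_exponent_ge (norm_pos_iff.mpr hw0)
          (le_trans hsmall hδ1) (by linarith)
      simpa using h1
    calc ‖w - w ^ ((1 : ℂ) + (n : ℂ)⁻¹)‖
        ≤ ‖w‖ + ‖w ^ ((1 : ℂ) + (n : ℂ)⁻¹)‖ := norm_sub_le _ _
      _ ≤ δ + δ := by rw [habs]; exact add_le_add hsmall (le_trans hle hsmall)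
      _ ≤ ε / 2 := by linarith
  · -- large case
    push_neg at hsmall
    have hlogw : ‖Complex.log w‖ ≤ L := by
      have h1 : ‖Complex.log w‖ ≤ |(Complex.log w).re| + |(Complex.log w).im| :=
        Complex.norm_le_abs_re_add_abs_im _
      rw [Complex.log_re, Complex.log_im] at h1
      have harg : |Complex.arg w| ≤ Real.pi := Complex.abs_arg_le_pi w
      have hlogab : |Real.log ‖w‖| ≤ |Real.log δ| + Real.log 2 := by
        have h2 : Real.log δ ≤ Real.log ‖w‖ :=
          Real.log_le_log hδpos (le_of_lt (by simpa using hsmall))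
        have h3 : Real.log ‖w‖ ≤ Real.log 2 :=
          Real.log_le_log (norm_pos_iff.mpr hw0) (by simpa using hw2)
        have h4 : Real.log δ ≤ 0 := Real.log_nonpos hδpos.le hδ1
        have h5 : (0:ℝ) ≤ Real.log 2 := Real.log_nonneg (by norm_num)
        have h6 := neg_abs_le (Real.log δ)
        have h7 := abs_nonneg (Real.log δ)
        rw [abs_le]
        constructor <;> linarith
      linarith
    have hrw : w ^ ((1 : ℂ) + (n : ℂ)⁻¹) = w * w ^ ((n : ℂ)⁻¹) := by
      rw [Complex.cpow_add _ _ hw0, Complex.cpow_one]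
    have hcpow : w ^ ((n : ℂ)⁻¹) = Complex.exp (Complex.log w * (n : ℂ)⁻¹) :=
      Complex.cpow_def_of_ne_zero hw0 _
    set u : ℂ := Complex.log w * (n : ℂ)⁻¹ with hu
    have hnormu : ‖u‖ ≤ L / n := by
      rw [hu, norm_mul, norm_inv, Complex.norm_natCast]
      rw [div_eq_mul_inv]
      exact mul_le_mul_of_nonneg_right hlogw hninv
    have hLn1 : L / n ≤ 1 := by
      rw [div_le_one hnpos]; exact hnL
    have hu1 : ‖u‖ ≤ 1 := by
      exact le_trans hnormu hLn1
    have hexpbound : ‖Complex.exp u - 1‖ ≤ 2 * (L / n) := by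
      have := Complex.norm_exp_sub_one_le hu1
      exact le_trans this (by linarith [hnormu])
    have hfinal : ‖w - w ^ ((1 : ℂ) + (n : ℂ)⁻¹)‖ ≤ 2 * (2 * (L / n)) := by
      rw [hrw, ← mul_one_sub, norm_mul, hcpow]
      have : ‖1 - Complex.exp u‖ = ‖Complex.exp u - 1‖ := norm_sub_rev _ _
      rw [this]
      exact mul_le_mul hw2 hexpbound (norm_nonneg _) (by norm_num)
    have h8 : 8 * L ≤ ε * n := by
      rw [div_le_iff₀ hε] at hnε; linarith
    have : 2 * (2 * (L / n)) ≤ ε / 2 := by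
      rw [div_le_iff₀ hnpos] at *
      have : 4 * L ≤ ε / 2 * n := by linarith
      calc 2 * (2 * (L / n)) = 4 * L / n := by ring
        _ ≤ ε / 2 := by rw [div_le_iff₀ hnpos]; linarith
    linarith [hfinal]

/-- Let `p_n(z) = 1 - z - (1-z)^{1+1/n}` (principal branch of the power) on the closed unit
disk. Then `‖p_n‖_∞ → 0` as `n → ∞`. -/
theorem stmt_6 :
    Tendsto (fun n : ℕ =>
        ⨆ z : Metric.closedBall (0 : ℂ) 1,
          ‖1 - (z : ℂ) - (1 - (z : ℂ)) ^ ((1 : ℂ) + (n : ℂ)⁻¹)‖)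
      atTop (𝓝 0) := by
  have hne : Nonempty (Metric.closedBall (0 : ℂ) 1) :=
    ⟨⟨0, Metric.mem_closedBall_self zero_le_one⟩⟩
  rw [Metric.tendsto_nhds]
  intro ε hε
  filter_upwards [stmt_6_key ε hε] with n hn
  have hsup : (⨆ z : Metric.closedBall (0 : ℂ) 1,
      ‖1 - (z : ℂ) - (1 - (z : ℂ)) ^ ((1 : ℂ) + (n : ℂ)⁻¹)‖) ≤ ε / 2 := by
    apply ciSup_le
    intro z
    apply hn
    have hz : ‖(z : ℂ)‖ ≤ 1 := mem_closedBall_zero_iff.mp z.2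
    calc ‖(1 : ℂ) - (z : ℂ)‖ ≤ ‖(1 : ℂ)‖ + ‖(z : ℂ)‖ := norm_sub_le _ _
      _ ≤ 2 := by rw [norm_one]; linarith
  have hnonneg : (0:ℝ) ≤ ⨆ z : Metric.closedBall (0 : ℂ) 1,
      ‖1 - (z : ℂ) - (1 - (z : ℂ)) ^ ((1 : ℂ) + (n : ℂ)⁻¹)‖ :=
    Real.iSup_nonneg fun z => norm_nonneg _
  rw [Real.dist_eq, sub_zero, abs_of_nonneg hnonneg]
  linarith
end

section
/- If X is an M-ideal in a Banach space Y, then X is proximinal in Y: for every y ∈ Y there exists x ∈ X with ‖y − x‖ = dist(y, X). -/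
/-- `X` is an M-ideal in `Y`: there is a projection `P` on `Y*` with
`‖φ‖ = ‖Pφ‖ + ‖φ - Pφ‖` for all `φ ∈ Y*` and `ker P = X^⊥`. -/
def IsMIdeal {Y : Type} [NormedAddCommGroup Y] [NormedSpace ℂ Y] (X : Submodule ℂ Y) : Prop :=
  ∃ P : StrongDual ℂ Y →L[ℂ] StrongDual ℂ Y,
    (∀ φ, P (P φ) = P φ) ∧ (∀ φ, ‖φ‖ = ‖P φ‖ + ‖φ - P φ‖) ∧
    (∀ φ : StrongDual ℂ Y, P φ = 0 ↔ ∀ x ∈ X, φ x = 0)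

private lemma le_infDist_aux {Y : Type} [NormedAddCommGroup Y] {s : Set Y} (hs : s.Nonempty)
    {b : ℝ} {x : Y} (h : ∀ w ∈ s, b ≤ dist x w) : b ≤ Metric.infDist x s :=
  le_of_not_gt fun hlt => by
    obtain ⟨w, hw, hd⟩ := (Metric.infDist_lt_iff hs).1 hlt
    exact absurd (h w hw) (not_le.2 hd)

set_option maxHeartbeats 1000000 in
/-- Key lemma: from the M-ideal property, for any `z` one can find `w ∈ X` with
`‖z - w‖ ≤ d + ε` and `‖w‖ ≤ ‖z‖ - d + ε`, where `d = dist(z, X)`. -/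
private lemma mideal_key {Y : Type} [NormedAddCommGroup Y] [NormedSpace ℂ Y]
    (X : Submodule ℂ Y) (hX : IsMIdeal X) (z : Y) (ε : ℝ) (hε : 0 < ε) :
    ∃ w ∈ X, ‖z - w‖ ≤ Metric.infDist z (X : Set Y) + ε ∧
      ‖w‖ ≤ ‖z‖ - Metric.infDist z (X : Set Y) + ε := by
  obtain ⟨P, hP1, hP2, hP3⟩ := hX
  set d : ℝ := Metric.infDist z (X : Set Y) with hd
  have hXne : (X : Set Y).Nonempty := ⟨0, X.zero_mem⟩
  have hd0 : 0 ≤ d := Metric.infDist_nonneg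
  have hdR : d ≤ ‖z‖ := by
    have := Metric.infDist_le_dist_of_mem (x := z) X.zero_mem
    simpa [dist_zero_right] using this
  rcases eq_or_ne ‖z‖ 0 with hz0 | hz0
  · -- trivial case z = 0
    have hz : z = 0 := norm_eq_zero.1 hz0
    have hdz : d = 0 := le_antisymm (by rw [hz0] at hdR; exact hdR) hd0
    exact ⟨0, X.zero_mem, by simp [hz, hdz, hε.le]⟩
  have hR : (0:ℝ) < ‖z‖ := lt_of_le_of_ne (norm_nonneg z) (Ne.symm hz0)
  -- the point v with ‖z - v‖ = d, ‖v‖ = ‖z‖ - d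
  set v : Y := ((‖z‖ - d)/‖z‖ : ℝ) • z with hv
  have hv1 : ‖z - v‖ = d := by
    have hzv : z - v = ((d/‖z‖ : ℝ)) • z := by
      rw [hv]
      rw [show z - ((‖z‖ - d)/‖z‖ : ℝ) • z = ((1:ℝ) - (‖z‖ - d)/‖z‖) • z by
        rw [sub_smul, one_smul]]
      congr 1
      field_simp
      ring
    rw [hzv, norm_smul, Real.norm_eq_abs, abs_of_nonneg (by positivity)]
    field_simp
  have hv2 : ‖v‖ = ‖z‖ - d := by
    rw [hv, norm_smul, Real.norm_eq_abs,
      abs_of_nonneg (div_nonneg (by linarith) hR.le)]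
    field_simp
  -- basic estimates from the M-ideal structure
  have hPle : ∀ φ : StrongDual ℂ Y, ‖P φ‖ ≤ ‖φ‖ := fun φ => by
    have := hP2 φ; linarith [norm_nonneg (φ - P φ)]
  have hker' : ∀ (φ : StrongDual ℂ Y), ∀ x ∈ X, (φ - P φ) x = 0 := by
    intro φ x hx
    have hzero : P (φ - P φ) = 0 := by rw [map_sub, hP1 φ, sub_self]
    exact (hP3 (φ - P φ)).1 hzero x hx
  -- ‖ψ z‖ ≤ ‖ψ‖ * d for ψ vanishing on X
  have hvanish : ∀ ψ : StrongDual ℂ Y, (∀ x ∈ X, ψ x = 0) → ‖ψ z‖ ≤ ‖ψ‖ * d := by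
    intro ψ hψ
    rcases eq_or_lt_of_le (norm_nonneg ψ) with h0 | h0
    · have hψz : ‖ψ z‖ ≤ 0 := by
        have := ψ.le_opNorm z
        rw [← h0] at this
        simpa using this
      have : ‖ψ z‖ = 0 := le_antisymm hψz (norm_nonneg _)
      rw [this]
      positivity
    · rw [← div_le_iff₀' h0]
      refine le_infDist_aux hXne ?_
      intro w hw
      rw [div_le_iff₀' h0, dist_eq_norm]
      calc ‖ψ z‖ = ‖ψ (z - w)‖ := by rw [map_sub, hψ w hw, sub_zero]
        _ ≤ ‖ψ‖ * ‖z - w‖ := ψ.le_opNorm _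
  -- key estimate: |φ z - (P φ) v| ≤ d ‖φ‖
  have hE2 : ∀ φ : StrongDual ℂ Y, ‖φ z - (P φ) v‖ ≤ d * ‖φ‖ := by
    intro φ
    have hsplit : φ z - (P φ) v = (P φ) (z - v) + (φ - P φ) z := by
      simp only [map_sub, ContinuousLinearMap.sub_apply]
      ring
    calc ‖φ z - (P φ) v‖ = ‖(P φ) (z - v) + (φ - P φ) z‖ := by rw [hsplit]
      _ ≤ ‖(P φ) (z - v)‖ + ‖(φ - P φ) z‖ := norm_add_le _ _
      _ ≤ ‖P φ‖ * ‖z - v‖ + ‖φ - P φ‖ * d :=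
          add_le_add ((P φ).le_opNorm _) (hvanish _ (hker' φ))
      _ = d * (‖P φ‖ + ‖φ - P φ‖) := by rw [hv1]; ring
      _ = d * ‖φ‖ := by rw [← hP2 φ]
  -- estimate |(P φ) v| ≤ ‖φ‖ (‖z‖ - d)
  have hE3 : ∀ φ : StrongDual ℂ Y, ‖(P φ) v‖ ≤ ‖φ‖ * (‖z‖ - d) := by
    intro φ
    calc ‖(P φ) v‖ ≤ ‖P φ‖ * ‖v‖ := (P φ).le_opNorm _
      _ ≤ ‖φ‖ * (‖z‖ - d) := by
          rw [hv2]; exact mul_le_mul_of_nonneg_right (hPle φ) (by linarith)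
  -- separation argument
  by_contra hcon
  push_neg at hcon
  set r₁ : ℝ := d + ε with hr₁
  set r₂ : ℝ := ‖z‖ - d + ε with hr₂
  have hr₁0 : 0 < r₁ := by positivity
  have hr₂0 : 0 < r₂ := by simp only [hr₂]; linarith
  set s : Set (Y × Y) := (Metric.ball (0:Y) r₁) ×ˢ (Metric.ball (0:Y) r₂) with hs
  set t : Set (Y × Y) := (fun x : Y => (z - x, -x)) '' (X : Set Y) with ht
  have hs_open : IsOpen s := (Metric.isOpen_ball).prod Metric.isOpen_ball
  have hs_conv : Convex ℝ s := (convex_ball _ _).prod (convex_ball _ _)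
  have hmem_smul : ∀ (a : ℝ) (x : Y), x ∈ X → a • x ∈ X := fun a x hx =>
    X.smul_of_tower_mem a hx
  have ht_conv : Convex ℝ t := by
    rintro p ⟨x₁, hx₁, rfl⟩ q ⟨x₂, hx₂, rfl⟩ a b ha hb hab
    refine ⟨a • x₁ + b • x₂, X.add_mem (hmem_smul a x₁ hx₁) (hmem_smul b x₂ hx₂), ?_⟩
    simp only [Prod.smul_mk, Prod.mk_add_mk, Prod.mk.injEq]
    constructor
    · match_scalars <;> linarith
    · match_scalars <;> linarith
  have hdisj : Disjoint s t := by
    rw [Set.disjoint_left]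
    rintro p hps ⟨x, hx, rfl⟩
    rw [hs, Set.mem_prod] at hps
    obtain ⟨h1, h2⟩ := hps
    rw [Metric.mem_ball, dist_zero_right] at h1 h2
    rw [norm_neg] at h2
    exact absurd h2 (not_lt.2 (le_of_lt (hcon x hx h1.le)))
  obtain ⟨f, c, hfs, hft⟩ := geometric_hahn_banach_open hs_conv hs_open ht_conv hdisj
  set f₁ : Y →L[ℝ] ℝ := f.comp (ContinuousLinearMap.inl ℝ Y Y) with hf₁
  set f₂ : Y →L[ℝ] ℝ := f.comp (ContinuousLinearMap.inr ℝ Y Y) with hf₂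
  have hf_split : ∀ a b : Y, f (a, b) = f₁ a + f₂ b := by
    intro a b
    have hab : ((a, b) : Y × Y) = (a, 0) + (0, b) := by simp
    rw [hab, map_add]
    simp [hf₁, hf₂]
  have ht' : ∀ x ∈ X, c ≤ f₁ (z - x) + f₂ (-x) := by
    intro x hx
    have := hft _ ⟨x, hx, rfl⟩
    rwa [hf_split] at this
  -- f₁ + f₂ vanishes on X
  have hg : ∀ x ∈ X, f₁ x + f₂ x = 0 := by
    intro x hx
    by_contra hne
    set T : ℝ := (f₁ z - c + 1)/(f₁ x + f₂ x) with hT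
    have hTT := ht' (T • x) (hmem_smul T x hx)
    rw [map_sub, map_smul, map_neg, map_smul] at hTT
    have hcomp : f₁ z - T • (f₁ x) + -(T • f₂ x) = f₁ z - T * (f₁ x + f₂ x) := by
      simp only [smul_eq_mul]; ring
    rw [hcomp, hT, div_mul_cancel₀ _ hne] at hTT
    linarith
  have hcanchor : c ≤ f₁ z := by
    have := ht' 0 X.zero_mem
    simpa using this
  -- sup bound from the s side: r₁‖f₁‖ + r₂‖f₂‖ ≤ c
  have hS : r₁ * ‖f₁‖ + r₂ * ‖f₂‖ ≤ c := by
    by_contra hlt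
    push_neg at hlt
    set δ : ℝ := (r₁ * ‖f₁‖ + r₂ * ‖f₂‖ - c)/(r₁ + r₂) with hδ
    have hδ0 : 0 < δ := div_pos (by linarith) (by linarith)
    obtain ⟨a, ha1, ha2⟩ := f₁.exists_lt_apply_of_lt_opNorm (r := ‖f₁‖ - δ) (by linarith)
    obtain ⟨b, hb1, hb2⟩ := f₂.exists_lt_apply_of_lt_opNorm (r := ‖f₂‖ - δ) (by linarith)
    set a₀ : Y := if 0 ≤ f₁ a then a else -a with ha₀
    set b₀ : Y := if 0 ≤ f₂ b then b else -b with hb₀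
    have ha₀1 : ‖a₀‖ < 1 := by rw [ha₀]; split <;> simpa
    have hb₀1 : ‖b₀‖ < 1 := by rw [hb₀]; split <;> simpa
    have ha₀2 : ‖f₁‖ - δ < f₁ a₀ := by
      rw [ha₀]; split_ifs with h
      · rwa [Real.norm_eq_abs, abs_of_nonneg h] at ha2
      · rw [map_neg]
        rwa [Real.norm_eq_abs, abs_of_neg (not_le.1 h)] at ha2
    have hb₀2 : ‖f₂‖ - δ < f₂ b₀ := by
      rw [hb₀]; split_ifs with h
      · rwa [Real.norm_eq_abs, abs_of_nonneg h] at hb2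
      · rw [map_neg]
        rwa [Real.norm_eq_abs, abs_of_neg (not_le.1 h)] at hb2
    have hmem : ((r₁ • a₀, r₂ • b₀) : Y × Y) ∈ s := by
      rw [hs, Set.mem_prod]
      constructor
      · rw [Metric.mem_ball, dist_zero_right, norm_smul, Real.norm_eq_abs, abs_of_pos hr₁0]
        exact mul_lt_of_lt_one_right hr₁0 ha₀1
      · rw [Metric.mem_ball, dist_zero_right, norm_smul, Real.norm_eq_abs, abs_of_pos hr₂0]
        exact mul_lt_of_lt_one_right hr₂0 hb₀1
    have hfv := hfs _ hmem
    rw [hf_split, map_smul, map_smul] at hfv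
    simp only [smul_eq_mul] at hfv
    have hδeq : δ * (r₁ + r₂) = r₁ * ‖f₁‖ + r₂ * ‖f₂‖ - c := by
      rw [hδ, div_mul_cancel₀ _ (by positivity : r₁ + r₂ ≠ 0)]
    nlinarith [mul_lt_mul_of_pos_left ha₀2 hr₁0, mul_lt_mul_of_pos_left hb₀2 hr₂0]
  -- complexify f₁, f₂
  set φ₁ : StrongDual ℂ Y := f₁.extendTo𝕜' with hφ₁
  set φ₂ : StrongDual ℂ Y := f₂.extendTo𝕜' with hφ₂
  have hφ₁app : ∀ u : Y, φ₁ u = (f₁ u : ℂ) - Complex.I * (f₁ ((Complex.I : ℂ) • u) : ℂ) :=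
    fun u => f₁.extendTo𝕜'_apply u
  have hφ₂app : ∀ u : Y, φ₂ u = (f₂ u : ℂ) - Complex.I * (f₂ ((Complex.I : ℂ) • u) : ℂ) :=
    fun u => f₂.extendTo𝕜'_apply u
  have hφ₁norm : ‖φ₁‖ = ‖f₁‖ := f₁.norm_extendTo𝕜'
  have hφ₂norm : ‖φ₂‖ = ‖f₂‖ := f₂.norm_extendTo𝕜'
  have hφ₁re : ∀ u : Y, (φ₁ u).re = f₁ u := by
    intro u
    rw [hφ₁app]
    simp
  -- φ₁ + φ₂ vanishes on X
  have hφsum : ∀ x ∈ X, (φ₁ + φ₂) x = 0 := by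
    intro x hx
    have h1 := hg x hx
    have h2 := hg ((Complex.I : ℂ) • x) (X.smul_mem _ hx)
    rw [ContinuousLinearMap.add_apply, hφ₁app, hφ₂app]
    have : ((f₁ x : ℂ) + (f₂ x : ℂ)) - Complex.I * ((f₁ ((Complex.I : ℂ) • x) : ℂ)
        + (f₂ ((Complex.I : ℂ) • x) : ℂ)) = 0 := by
      rw [← Complex.ofReal_add, ← Complex.ofReal_add, h1, h2]
      simp
    rw [← this]
    ring
  have hPsum : P (φ₁ + φ₂) = 0 := (hP3 _).2 hφsum
  have hPv : (P φ₁) v + (P φ₂) v = 0 := by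
    have : P φ₁ + P φ₂ = 0 := by rw [← map_add, hPsum]
    calc (P φ₁) v + (P φ₂) v = (P φ₁ + P φ₂) v := by
          rw [ContinuousLinearMap.add_apply]
      _ = 0 := by rw [this]; rfl
  -- final estimate: f₁ z ≤ d ‖f₁‖ + (‖z‖ - d) ‖f₂‖
  have hfz : f₁ z ≤ d * ‖f₁‖ + (‖z‖ - d) * ‖f₂‖ := by
    have hdecomp : f₁ z = (φ₁ z - (P φ₁) v).re + ((P φ₁) v).re := by
      rw [← hφ₁re z]
      simp [Complex.sub_re]
    have h1 : (φ₁ z - (P φ₁) v).re ≤ d * ‖f₁‖ := by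
      calc (φ₁ z - (P φ₁) v).re ≤ ‖φ₁ z - (P φ₁) v‖ := Complex.re_le_norm _
        _ ≤ d * ‖φ₁‖ := hE2 φ₁
        _ = d * ‖f₁‖ := by rw [hφ₁norm]
    have h2 : ((P φ₁) v).re ≤ (‖z‖ - d) * ‖f₂‖ := by
      have hneg : (P φ₁) v = -((P φ₂) v) := by linear_combination hPv
      calc ((P φ₁) v).re = -(((P φ₂) v).re) := by rw [hneg, Complex.neg_re]
        _ ≤ ‖(P φ₂) v‖ := by
            rw [neg_le]
            exact neg_le_of_abs_le (le_trans (Complex.abs_re_le_norm _) le_rfl)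
        _ ≤ ‖φ₂‖ * (‖z‖ - d) := hE3 φ₂
        _ = (‖z‖ - d) * ‖f₂‖ := by rw [hφ₂norm]; ring
    linarith
  -- derive the contradiction
  have hnormsum : ‖f₁‖ + ‖f₂‖ ≤ 0 := by
    have : r₁ * ‖f₁‖ + r₂ * ‖f₂‖ ≤ d * ‖f₁‖ + (‖z‖ - d) * ‖f₂‖ := le_trans hS (le_trans hcanchor hfz)
    rw [hr₁, hr₂] at this
    nlinarith
  have hf₁0 : ‖f₁‖ = 0 := le_antisymm (by linarith [norm_nonneg f₂]) (norm_nonneg f₁)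
  have hf₂0 : ‖f₂‖ = 0 := le_antisymm (by linarith [norm_nonneg f₁]) (norm_nonneg f₂)
  have hf₁z : f₁ z = 0 := by
    have : f₁ = 0 := norm_eq_zero.1 hf₁0
    rw [this]; rfl
  have h00 : ((0, 0) : Y × Y) ∈ s := by
    rw [hs, Set.mem_prod]
    exact ⟨Metric.mem_ball_self hr₁0, Metric.mem_ball_self hr₂0⟩
  have h0c : (0:ℝ) < c := by
    have := hfs _ h00
    rwa [hf_split, map_zero, map_zero, add_zero] at this
  linarith [hcanchor, h0c, hf₁z]

private lemma infDist_sub_mem {Y : Type} [NormedAddCommGroup Y] [NormedSpace ℂ Y]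
    (X : Submodule ℂ Y) {x₀ : Y} (hx₀ : x₀ ∈ X) (y : Y) :
    Metric.infDist (y - x₀) (X : Set Y) = Metric.infDist y (X : Set Y) := by
  have hXne : (X : Set Y).Nonempty := ⟨0, X.zero_mem⟩
  apply le_antisymm
  · refine le_infDist_aux hXne ?_
    intro w hw
    have h1 : Metric.infDist (y - x₀) (X : Set Y) ≤ dist (y - x₀) (w - x₀) :=
      Metric.infDist_le_dist_of_mem (X.sub_mem hw hx₀)
    calc Metric.infDist (y - x₀) (X : Set Y) ≤ dist (y - x₀) (w - x₀) := h1
      _ = dist y w := by rw [dist_eq_norm, dist_eq_norm]; congr 1; abel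
  · refine le_infDist_aux hXne ?_
    intro w hw
    have h1 : Metric.infDist y (X : Set Y) ≤ dist y (w + x₀) :=
      Metric.infDist_le_dist_of_mem (X.add_mem hw hx₀)
    calc Metric.infDist y (X : Set Y) ≤ dist y (w + x₀) := h1
      _ = dist (y - x₀) w := by rw [dist_eq_norm, dist_eq_norm]; congr 1; abel

/-- **M-ideals are proximinal (Alfsen–Effros).** If `X` is an M-ideal in a Banach space `Y`,
then for every `y ∈ Y` there exists `x ∈ X` with `‖y - x‖ = dist(y, X)`. -/
theorem stmt_15 {Y : Type} [NormedAddCommGroup Y] [NormedSpace ℂ Y] [CompleteSpace Y]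
    (X : Submodule ℂ Y) (hXclosed : IsClosed (X : Set Y)) (hX : IsMIdeal X) (y : Y) :
    ∃ x ∈ X, ‖y - x‖ = Metric.infDist y (X : Set Y) := by
  set d : ℝ := Metric.infDist y (X : Set Y) with hd
  have hXne : (X : Set Y).Nonempty := ⟨0, X.zero_mem⟩
  -- inductive step
  have step : ∀ (n : ℕ) (x : Y), x ∈ X → ‖y - x‖ ≤ d + (1/2) ^ n →
      ∃ x', x' ∈ X ∧ ‖y - x'‖ ≤ d + (1/2) ^ (n + 1) ∧ ‖x' - x‖ ≤ 2 * (1/2) ^ n := by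
    intro n x hxX hxd
    obtain ⟨w, hwX, hw1, hw2⟩ := mideal_key X hX (y - x) ((1/2) ^ (n+1)) (by positivity)
    rw [infDist_sub_mem X hxX y, ← hd] at hw1 hw2
    refine ⟨x + w, X.add_mem hxX hwX, ?_, ?_⟩
    · calc ‖y - (x + w)‖ = ‖y - x - w‖ := by congr 1; abel
        _ ≤ d + (1/2) ^ (n+1) := hw1
    · have hdnn : 0 ≤ d := Metric.infDist_nonneg
      calc ‖x + w - x‖ = ‖w‖ := by congr 1; abel
        _ ≤ ‖y - x‖ - d + (1/2) ^ (n+1) := hw2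
        _ ≤ (1/2) ^ n + (1/2) ^ (n+1) := by linarith
        _ ≤ 2 * (1/2) ^ n := by
            have : ((1:ℝ)/2) ^ (n+1) ≤ (1/2) ^ n := by
              apply pow_le_pow_of_le_one (by norm_num) (by norm_num)
              omega
            linarith
  choose! F hF1 hF2 hF3 using step
  -- base point
  obtain ⟨x₀, hx₀X, hx₀d⟩ : ∃ x ∈ X, dist y x < d + (1/2) ^ 0 := by
    apply (Metric.infDist_lt_iff hXne).1
    rw [← hd]
    norm_num
  -- the sequence
  set u : ℕ → Y := fun n => Nat.rec x₀ (fun n x => F n x) n with hu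
  have hu0 : u 0 = x₀ := rfl
  have husucc : ∀ n, u (n + 1) = F n (u n) := fun n => rfl
  have hmem : ∀ n, u n ∈ X ∧ ‖y - u n‖ ≤ d + (1/2) ^ n := by
    intro n
    induction n with
    | zero =>
      refine ⟨hx₀X, ?_⟩
      rw [hu0]
      rw [dist_eq_norm] at hx₀d
      exact hx₀d.le
    | succ n ih =>
      rw [husucc]
      exact ⟨hF1 n (u n) ih.1 ih.2, hF2 n (u n) ih.1 ih.2⟩
  have hstep : ∀ n, dist (u n) (u (n + 1)) ≤ 2 * (1/2) ^ n := by
    intro n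
    rw [dist_eq_norm, norm_sub_rev, husucc]
    exact hF3 n (u n) (hmem n).1 (hmem n).2
  -- convergence
  have hcauchy : CauchySeq u := cauchySeq_of_le_geometric (1/2) 2 (by norm_num) hstep
  obtain ⟨x, hxlim⟩ := cauchySeq_tendsto_of_complete hcauchy
  have hxX : x ∈ X := hXclosed.mem_of_tendsto hxlim
    (Filter.Eventually.of_forall fun n => (hmem n).1)
  refine ⟨x, hxX, ?_⟩
  have hnlim : Filter.Tendsto (fun n => ‖y - u n‖) Filter.atTop (nhds ‖y - x‖) :=
    ((continuous_const.sub continuous_id).norm.continuousAt.tendsto.comp hxlim)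
  apply le_antisymm
  · have hblim : Filter.Tendsto (fun n : ℕ => d + (1/2 : ℝ) ^ n) Filter.atTop (nhds d) := by
      have : Filter.Tendsto (fun n : ℕ => ((1:ℝ)/2) ^ n) Filter.atTop (nhds 0) :=
        tendsto_pow_atTop_nhds_zero_of_lt_one (by norm_num) (by norm_num)
      simpa using Filter.Tendsto.const_add d this
    exact le_of_tendsto_of_tendsto' hnlim hblim fun n => (hmem n).2
  · have := Metric.infDist_le_dist_of_mem (x := y) hxX
    rwa [dist_eq_norm] at this
end

section
/- Let A = ℂq ⊆ M₂ where q is a nontrivial projection in M₂ (e.g. rank one), and b = q. Then the conclusion of the noncommutative peak interpolation theorem can fail without the hypothesis dq = qd: there exist a closed projection q' and positive invertible d ∈ M₂ with q' b* b q' ≤ q' d but no g ∈ A with g q' = q' g = b q' and g*g ≤ d. -/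
open scoped ComplexOrder
open Matrix

private lemma cpos_lt (c S : ℂ) (hc : 0 < c) (h : 0 < c * S) : 0 < S := by
  rw [Complex.lt_def] at hc h ⊢
  obtain ⟨hc1, hc2⟩ := hc
  simp only [Complex.zero_re, Complex.zero_im, Complex.mul_re, Complex.mul_im, ← hc2,
    zero_mul, mul_zero, sub_zero, add_zero, zero_add] at *
  refine ⟨(mul_pos_iff_of_pos_left hc1).mp h.1, ?_⟩
  rcases mul_eq_zero.mp h.2.symm with h' | h'
  · exact absurd h' (ne_of_gt hc1)
  · exact h'.symm

private lemma quad_expand (M : Matrix (Fin 2) (Fin 2) ℂ) (v : Fin 2 → ℂ) :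
    star v ⬝ᵥ (M *ᵥ v) = star (v 0) * (M 0 0 * v 0 + M 0 1 * v 1) + star (v 1) * (M 1 0 * v 0 + M 1 1 * v 1) := by
  simp [dotProduct, Matrix.mulVec, Fin.sum_univ_two]

private lemma key_identity (M : Matrix (Fin 2) (Fin 2) ℂ) (hM : M.IsHermitian) (v : Fin 2 → ℂ) :
    M 0 0 * (star v ⬝ᵥ (M *ᵥ v)) =
      star (M 0 0 * v 0 + M 0 1 * v 1) * (M 0 0 * v 0 + M 0 1 * v 1)
        + (M 0 0 * M 1 1 - M 0 1 * M 1 0) * (star (v 1) * v 1) := by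
  have h00 : star (M 0 0) = M 0 0 := hM.apply 0 0
  have h01 : star (M 0 1) = M 1 0 := hM.apply 1 0
  rw [quad_expand]
  simp only [star_add, star_mul', h00, h01]
  ring

private lemma posDef_two (M : Matrix (Fin 2) (Fin 2) ℂ) (hM : M.IsHermitian)
    (h00 : 0 < M 0 0)
    (hdet : 0 < M 0 0 * M 1 1 - M 0 1 * M 1 0) : M.PosDef := by
  refine Matrix.PosDef.of_dotProduct_mulVec_pos hM (fun v hv => ?_)
  by_cases h1 : v 1 = 0
  · have h0 : v 0 ≠ 0 := by
      intro h0'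
      apply hv
      funext i; fin_cases i <;> assumption
    refine cpos_lt _ _ h00 ?_
    rw [key_identity M hM v, h1]
    have e : star (M 0 0 * v 0 + M 0 1 * 0) * (M 0 0 * v 0 + M 0 1 * 0)
        + (M 0 0 * M 1 1 - M 0 1 * M 1 0) * (star (0:ℂ) * 0)
        = star (M 0 0 * v 0) * (M 0 0 * v 0) := by ring
    rw [e]
    have hne : M 0 0 * v 0 ≠ 0 := mul_ne_zero (ne_of_gt h00) h0
    rw [show star (M 0 0 * v 0) * (M 0 0 * v 0) = (Complex.normSq (M 0 0 * v 0) : ℂ) by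
      rw [← Complex.mul_conj, Complex.star_def]; ring]
    exact_mod_cast Complex.normSq_pos.mpr hne
  · refine cpos_lt _ _ h00 ?_
    rw [key_identity M hM v]
    have hpos : 0 < (M 0 0 * M 1 1 - M 0 1 * M 1 0) * (star (v 1) * v 1) := by
      refine mul_pos hdet ?_
      rw [show star (v 1) * v 1 = (Complex.normSq (v 1) : ℂ) by
        rw [← Complex.mul_conj, Complex.star_def]; ring]
      exact_mod_cast Complex.normSq_pos.mpr h1
    exact lt_of_lt_of_le hpos (le_add_of_nonneg_left (star_mul_self_nonneg _))


set_option maxHeartbeats 2000000 in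
/-- **The commutation hypothesis `dq = qd` cannot be dropped in the peak interpolation
theorem.**  Let `A = ℂq ⊆ M₂` for a nontrivial projection `q`, and `b = q`.  Then there
exist a (closed) projection `q'` lying in `(A¹)^{⊥⊥} = span{q, 1}` commuting with `b`, and
a positive invertible `d ∈ M₂` with `q' b* b q' ≤ q' d q'` but `q'd ≠ dq'`, such that no
`g ∈ A` satisfies `g q' = q' g = b q'` and `g* g ≤ d`. -/
theorem stmt_18 (q : Matrix (Fin 2) (Fin 2) ℂ)
    (hqidem : q * q = q) (hqherm : q.IsHermitian) (hq0 : q ≠ 0) (hq1 : q ≠ 1) :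
    ∃ q' d : Matrix (Fin 2) (Fin 2) ℂ,
      q' * q' = q' ∧ q'.IsHermitian ∧
      (∃ z w : ℂ, q' = z • q + w • 1) ∧
      q * q' = q' * q ∧
      d.PosDef ∧
      (q' * d * q' - q' * (q.conjTranspose * q) * q').PosSemidef ∧
      ¬ (q' * d = d * q') ∧
      ¬ ∃ z : ℂ, (z • q) * q' = q * q' ∧ q' * (z • q) = q' * q ∧
        (d - (z • q).conjTranspose * (z • q)).PosSemidef := by
  have h10 : star (q 0 1) = q 1 0 := hqherm.apply 1 0
  have haa : star (q 0 0) = q 0 0 := hqherm.apply 0 0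
  have E : ∀ i j : Fin 2, q i 0 * q 0 j + q i 1 * q 1 j = q i j := by
    intro i j
    have h := congrFun (congrFun hqidem i) j
    simpa [Matrix.mul_apply, Fin.sum_univ_two] using h
  have h11 : q 1 1 = 1 - q 0 0 := by
    by_cases hb : q 0 1 = 0
    · have hb' : q 1 0 = 0 := by rw [← h10, hb, star_zero]
      have e1 : q 0 0 * (q 0 0 - 1) = 0 := by linear_combination E 0 0 - q 1 0 * hb
      have e4 : q 1 1 * (q 1 1 - 1) = 0 := by linear_combination E 1 1 - q 0 1 * hb'
      rcases mul_eq_zero.mp e1 with h1 | h1 <;> rcases mul_eq_zero.mp e4 with h4 | h4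
      · exfalso; apply hq0
        ext i j; fin_cases i <;> fin_cases j <;> simp [hb, hb', h1, h4]
      · linear_combination h1 + h4
      · linear_combination h1 + h4
      · exfalso; apply hq1
        have h1' : q 0 0 = 1 := by linear_combination h1
        have h4' : q 1 1 = 1 := by linear_combination h4
        ext i j; fin_cases i <;> fin_cases j <;> simp [Matrix.one_apply, hb, hb', h1', h4']
    · have : q 0 1 * (q 0 0 + q 1 1 - 1) = 0 := by linear_combination E 0 1
      rcases mul_eq_zero.mp this with h | h
      · exact absurd h hb
      · linear_combination h
  -- realness
  obtain ⟨α, haα⟩ : ∃ α : ℝ, q 0 0 = (α : ℂ) :=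
    ⟨(q 0 0).re, ((Complex.conj_eq_iff_re).mp haa).symm⟩
  have hbb : q 0 1 * q 1 0 = (α:ℂ) - (α:ℂ)^2 := by
    have := E 0 0
    rw [haα] at this
    linear_combination this
  have hns : Complex.normSq (q 0 1) = α - α^2 := by
    have h1 : (Complex.normSq (q 0 1) : ℂ) = ((α - α^2 : ℝ) : ℂ) := by
      rw [← Complex.mul_conj, ← Complex.star_def, h10, hbb]
      push_cast; ring
    exact_mod_cast h1
  have hα0 : 0 ≤ α := by nlinarith [Complex.normSq_nonneg (q 0 1)]
  have hα1 : α ≤ 1 := by nlinarith [Complex.normSq_nonneg (q 0 1)]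
  by_cases hα : α = 0
  · -- q = !![0,0;0,1]
    have hb0 : q 0 1 = 0 := by
      have h0 : Complex.normSq (q 0 1) = 0 := by rw [hns, hα]; ring
      exact Complex.normSq_eq_zero.mp h0
    have hb0' : q 1 0 = 0 := by rw [← h10, hb0, star_zero]
    have hq_eq : q = !![0, 0; 0, 1] := by
      ext i j
      fin_cases i <;> fin_cases j <;>
        · simp [haα, hα, hb0, hb0', h11]
          try norm_num
    have hconj : q.conjTranspose = q := hqherm
    set lR : ℝ := Real.sqrt 6 / 2 with hlR_def
    have hlR_pos : 0 < lR := by positivity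
    have hlR_sq : lR^2 = 3/2 := by
      rw [hlR_def, div_pow, Real.sq_sqrt (by norm_num : (6:ℝ) ≥ 0)]; norm_num
    have hlR_gt : 1 < lR := by nlinarith
    set l : ℂ := (lR : ℂ) with hl_def
    have hl2 : l^2 = 3/2 := by
      rw [hl_def, ← Complex.ofReal_pow, hlR_sq]; norm_num
    have hl_ne : l ≠ 0 := by
      rw [hl_def, Ne, Complex.ofReal_eq_zero]; exact ne_of_gt hlR_pos
    refine ⟨q, !![1, l; l, 2], hqidem, hqherm, ⟨1, 0, by simp⟩, rfl, ?_, ?_, ?_, ?_⟩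
    · -- PosDef
      refine posDef_two _ ?_ ?_ ?_
      · show _ᴴ = _
        ext i j
        fin_cases i <;> fin_cases j <;>
          simp [Matrix.conjTranspose_apply, hl_def, Complex.star_def, Complex.conj_ofReal]
      · rw [show !![1, l; l, 2] 0 0 = 1 from rfl]
        exact zero_lt_one
      · have e00 : !![1, l; l, 2] 0 0 = 1 := rfl
        have e01 : !![1, l; l, 2] 0 1 = l := rfl
        have e10 : !![1, l; l, 2] 1 0 = l := rfl
        have e11 : !![1, l; l, 2] 1 1 = 2 := rfl
        rw [e00, e01, e10, e11]
        have e : (1:ℂ) * 2 - l * l = ((1/2 : ℝ) : ℂ) := by push_cast; linear_combination -hl2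
        rw [e]
        exact Complex.zero_lt_real.mpr (by norm_num)
    · -- PSD
      have e : q * !![1, l; l, 2] * q - q * (q.conjTranspose * q) * q = q.conjTranspose * q := by
        simp only [hconj, hqidem]
        subst hq_eq
        ext i j
        fin_cases i <;> fin_cases j <;>
          · simp [Matrix.mul_apply, Fin.sum_univ_two, Matrix.sub_apply]
            try norm_num
      rw [e]
      exact Matrix.posSemidef_conjTranspose_mul_self q
    · -- noncommute
      intro h
      have h' := congrFun (congrFun h 1) 0
      rw [hq_eq] at h'
      simp [Matrix.mul_apply, Fin.sum_univ_two] at h'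
      exact hl_ne h'
    · -- no interpolating g
      rintro ⟨z, h1, h2, h3⟩
      have hzq : z • q = q := by
        have h' : (z • q) * q = q * q := h1
        rwa [Matrix.smul_mul, hqidem] at h'
      have hd : (!![1, l; l, 2] - (z • q).conjTranspose * (z • q)) = !![1, l; l, 1] := by
        rw [hzq, hconj, hqidem, hq_eq]
        ext i j
        fin_cases i <;> fin_cases j <;>
          · simp [Matrix.sub_apply, Matrix.mul_apply, Fin.sum_univ_two]
            try norm_num
      rw [hd] at h3
      have hv := h3.dotProduct_mulVec_nonneg ![1, -1]
      rw [quad_expand] at hv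
      have e : star ((![(1:ℂ), -1]) 0) * (!![1, l; l, 1] 0 0 * (![(1:ℂ), -1]) 0 + !![1, l; l, 1] 0 1 * (![(1:ℂ), -1]) 1)
          + star ((![(1:ℂ), -1]) 1) * (!![1, l; l, 1] 1 0 * (![(1:ℂ), -1]) 0 + !![1, l; l, 1] 1 1 * (![(1:ℂ), -1]) 1)
          = ((2 - 2*lR : ℝ) : ℂ) := by
        show star (1:ℂ) * (1 * 1 + l * (-1)) + star (-1:ℂ) * (l * 1 + 1 * (-1)) = _
        rw [hl_def]; push_cast
        simp only [star_one, star_neg]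
        ring
      rw [e] at hv
      have := Complex.zero_le_real.mp hv
      nlinarith
  · have hαpos : 0 < α := lt_of_le_of_ne hα0 (Ne.symm hα)
    have hconj : q.conjTranspose = q := hqherm
    -- scalars
    set lR : ℝ := Real.sqrt 6 / 2 with hlR_def
    have hlR_pos : 0 < lR := by positivity
    have hlR_sq : lR^2 = 3/2 := by
      rw [hlR_def, div_pow, Real.sq_sqrt (by norm_num : (6:ℝ) ≥ 0)]; norm_num
    have hlR_gt : 1 < lR := by nlinarith
    set l : ℂ := (lR : ℂ) with hl_def
    have hl2 : l^2 = 3/2 := by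
      rw [hl_def, ← Complex.ofReal_pow, hlR_sq]; norm_num
    set cR : ℝ := lR / α with hcR_def
    have hcR_pos : 0 < cR := by positivity
    set c : ℂ := (cR : ℂ) with hc_def
    have hCA : c * (α:ℂ) = l := by
      rw [hc_def, hl_def, ← Complex.ofReal_mul]
      congr 1
      rw [hcR_def]
      field_simp
    set b : ℂ := q 0 1 with hb_def
    set p : ℂ := q 1 0 with hp_def
    have hpb : (starRingEnd ℂ) p = b := by
      rw [← h10, ← Complex.star_def, star_star]
    have hbp' : (starRingEnd ℂ) b = p := by rw [← Complex.star_def, hb_def, hp_def, h10]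
    have hbp : b * p = (α:ℂ) - (α:ℂ)^2 := by
      have h1 : b * (starRingEnd ℂ) b = (Complex.normSq b : ℂ) := Complex.mul_conj b
      rw [hbp', hns] at h1
      rw [h1]; push_cast; ring
    -- matrices
    set x : Matrix (Fin 2) (Fin 2) ℂ := c • (q * !![0, 1; 0, 0] * (1 - q)) with hx_def
    set d : Matrix (Fin 2) (Fin 2) ℂ := 1 + q + (x + xᴴ) with hd_def
    have h1q : (1 - q) * q = 0 := by rw [Matrix.sub_mul, Matrix.one_mul, hqidem, sub_self]
    have hxq : x * q = 0 := by
      rw [hx_def, Matrix.smul_mul, Matrix.mul_assoc, h1q, Matrix.mul_zero, smul_zero]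
    have hqx : q * x = x := by
      rw [hx_def, Matrix.mul_smul, ← Matrix.mul_assoc, ← Matrix.mul_assoc, hqidem]
    have hxhq : xᴴ * q = xᴴ := by
      conv_lhs => rw [← hconj, ← Matrix.conjTranspose_mul, hqx]
    have hqxh : q * xᴴ = 0 := by
      conv_lhs => rw [← hconj, ← Matrix.conjTranspose_mul, hxq]
      exact Matrix.conjTranspose_zero
    have hqd : q * d = q + q + x := by
      rw [hd_def]
      simp only [Matrix.mul_add, Matrix.mul_one, hqidem, hqx, hqxh, add_zero]
    have hdq : d * q = q + q + xᴴ := by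
      rw [hd_def]
      simp only [Matrix.add_mul, Matrix.one_mul, hqidem, hxq, hxhq, zero_add]
    have hqdq : q * d * q = q + q := by
      rw [hqd, Matrix.add_mul, Matrix.add_mul, hqidem, hxq, add_zero]
    have hdH : d.IsHermitian := by
      show dᴴ = d
      rw [hd_def]
      simp only [Matrix.conjTranspose_add, Matrix.conjTranspose_one, hconj,
        Matrix.conjTranspose_conjTranspose]
      abel
    -- star facts for scalars
    have hsc : (starRingEnd ℂ) c = c := by rw [hc_def]; exact Complex.conj_ofReal _
    have hsα : (starRingEnd ℂ) ((α:ℝ):ℂ) = ((α:ℝ):ℂ) := Complex.conj_ofReal _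
    have hsl : (starRingEnd ℂ) l = l := by rw [hl_def]; exact Complex.conj_ofReal _
    -- entry formulas
    have hq11 : q 1 1 = 1 - (α:ℂ) := by rw [h11, haα]
    have hxraw : ∀ i j, x i j = c * ((q i 0 * !![(0:ℂ), 1; 0, 0] 0 0 + q i 1 * !![(0:ℂ), 1; 0, 0] 1 0) * ((1 : Matrix (Fin 2) (Fin 2) ℂ) 0 j - q 0 j)
        + (q i 0 * !![(0:ℂ), 1; 0, 0] 0 1 + q i 1 * !![(0:ℂ), 1; 0, 0] 1 1) * ((1 : Matrix (Fin 2) (Fin 2) ℂ) 1 j - q 1 j)) := by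
      intro i j
      rw [hx_def]
      simp only [Matrix.smul_apply, smul_eq_mul, Matrix.mul_apply, Fin.sum_univ_two,
        Matrix.sub_apply]
    have hE : !![(0:ℂ), 1; 0, 0] 0 0 = 0 ∧ !![(0:ℂ), 1; 0, 0] 0 1 = 1 ∧ !![(0:ℂ), 1; 0, 0] 1 0 = 0 ∧ !![(0:ℂ), 1; 0, 0] 1 1 = 0 :=
      ⟨rfl, rfl, rfl, rfl⟩
    have hone : ((1 : Matrix (Fin 2) (Fin 2) ℂ) 0 0 = 1 ∧ (1 : Matrix (Fin 2) (Fin 2) ℂ) 1 1 = 1)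
        ∧ ((1 : Matrix (Fin 2) (Fin 2) ℂ) 0 1 = 0 ∧ (1 : Matrix (Fin 2) (Fin 2) ℂ) 1 0 = 0) := by
      constructor
      · exact ⟨Matrix.one_apply_eq 0, Matrix.one_apply_eq 1⟩
      · constructor <;> · rw [Matrix.one_apply_ne (by decide)]
    have hxE00 : x 0 0 = -(c*(α:ℂ)*p) := by
      rw [hxraw 0 0, hE.1, hE.2.1, hE.2.2.1, hE.2.2.2, hone.1.1, hone.2.2, haα, ← hp_def]
      ring
    have hxE01 : x 0 1 = c*(α:ℂ)^2 := by
      rw [hxraw 0 1, hE.1, hE.2.1, hE.2.2.1, hE.2.2.2, hone.2.1, hone.1.2, haα, hq11]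
      ring
    have hxE10 : x 1 0 = -(c*p^2) := by
      rw [hxraw 1 0, hE.1, hE.2.1, hE.2.2.1, hE.2.2.2, hone.1.1, hone.2.2, ← hp_def]
      ring
    have hxE11 : x 1 1 = c*(α:ℂ)*p := by
      rw [hxraw 1 1, hE.1, hE.2.1, hE.2.2.1, hE.2.2.2, hone.2.1, hone.1.2, ← hp_def, hq11]
      ring
    have hdE : ∀ i j, d i j = (1 : Matrix (Fin 2) (Fin 2) ℂ) i j + q i j + (x i j + (starRingEnd ℂ) (x j i)) := by
      intro i j
      rw [hd_def]
      simp only [Matrix.add_apply, Matrix.conjTranspose_apply, Complex.star_def]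
    have hd00 : d 0 0 = 1 + (α:ℂ) - l*(b + p) := by
      rw [hdE 0 0, hxE00, haα, hone.1.1]
      simp only [map_neg, _root_.map_mul, hsc, hsα, hpb]
      linear_combination (-(b+p))*hCA
    have hd01 : d 0 1 = b + c*(α:ℂ)^2 - c*b^2 := by
      rw [hdE 0 1, hxE01, hxE10, ← hb_def, hone.2.1]
      simp only [map_neg, _root_.map_mul, map_pow, hsc, hpb]
      ring
    have hd10 : d 1 0 = p + c*(α:ℂ)^2 - c*p^2 := by
      rw [hdE 1 0, hxE10, hxE01, ← hp_def, hone.2.2]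
      simp only [_root_.map_mul, map_pow, hsc, hsα]
      ring
    have hd11 : d 1 1 = 2 - (α:ℂ) + l*(b + p) := by
      rw [hdE 1 1, hxE11, hq11, hone.1.2]
      simp only [_root_.map_mul, hsc, hsα, hpb]
      linear_combination (b+p)*hCA
    -- b + p is real
    have hbpre : b + p = ((2*b.re : ℝ) : ℂ) := by
      rw [← hbp', Complex.add_conj]
    have hbre2 : b.re^2 ≤ α - α^2 := by
      have := Complex.normSq_apply b
      nlinarith [sq_nonneg b.im, hns, this]
    -- the four conclusions
    refine ⟨q, d, hqidem, hqherm, ⟨1, 0, by simp⟩, rfl, ?_, ?_, ?_, ?_⟩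
    · -- PosDef
      refine posDef_two d hdH ?_ ?_
      · rw [hd00, hbpre, hl_def]
        have e : 1 + ((α:ℝ):ℂ) - (lR:ℂ)*((2*b.re : ℝ):ℂ) = ((1 + α - lR*(2*b.re) : ℝ):ℂ) := by
          push_cast; ring
        rw [e]
        refine Complex.zero_lt_real.mpr ?_
        nlinarith [sq_nonneg (2*lR*b.re - (1+α)), sq_nonneg (7*α - 2), hlR_sq, hαpos, hα1, hbre2, hlR_pos]
      · rw [hd00, hd01, hd10, hd11]
        have e : (1 + (α:ℂ) - l*(b + p)) * (2 - (α:ℂ) + l*(b + p))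
            - (b + c*(α:ℂ)^2 - c*b^2) * (p + c*(α:ℂ)^2 - c*p^2) = ((1/2 : ℝ):ℂ) := by
          push_cast
          linear_combination (-1 - 2*l^2 - (α:ℂ)*c^2 + (α:ℂ)^2*c^2 + p*c + b*c - b*p*c^2) * hbp
            + (-l - (α:ℂ)*c + 2*(α:ℂ)*l + 2*(α:ℂ)^2*c - 2*(α:ℂ)^2*l - 2*(α:ℂ)^3*c + p - 2*p*(α:ℂ)
                + p^2*l + p^2*(α:ℂ)*c + b - 2*b*(α:ℂ) + b^2*l + b^2*(α:ℂ)*c) * hCA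
            + (-1) * hl2
        rw [e]
        exact Complex.zero_lt_real.mpr (by norm_num)
    · -- PSD
      have e : q * d * q - q * (q.conjTranspose * q) * q = q.conjTranspose * q := by
        rw [hqdq, hconj, hqidem, hqidem, hqidem]
        abel
      rw [e]
      exact Matrix.posSemidef_conjTranspose_mul_self q
    · -- noncommute
      intro h
      rw [hqd, hdq] at h
      have hx_eq_xh : x = xᴴ := by
        have := add_left_cancel h
        exact this
      have hx0 : x = 0 := by
        rw [← hqx, hx_eq_xh, hqxh]
      have := congrFun (congrFun hx0 0) 1
      rw [hxE01] at this
      simp only [Matrix.zero_apply] at this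
      rcases mul_eq_zero.mp this with h' | h'
      · rw [hc_def, Complex.ofReal_eq_zero] at h'
        exact absurd h' (ne_of_gt hcR_pos)
      · rw [pow_eq_zero_iff (by norm_num), Complex.ofReal_eq_zero] at h'
        exact absurd h' (ne_of_gt hαpos)
    · -- no interpolating g
      rintro ⟨z, h1, h2, h3⟩
      have hzq : z • q = q := by
        have h' : (z • q) * q = q * q := h1
        rwa [Matrix.smul_mul, hqidem] at h'
      rw [hzq, hconj, hqidem] at h3
      have hv := h3.dotProduct_mulVec_nonneg ![(α:ℂ) + b, p - (α:ℂ)]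
      rw [quad_expand] at hv
      have ev0 : (![(α:ℂ) + b, p - (α:ℂ)]) 0 = (α:ℂ) + b := rfl
      have ev1 : (![(α:ℂ) + b, p - (α:ℂ)]) 1 = p - (α:ℂ) := rfl
      have es0 : star ((α:ℂ) + b) = (α:ℂ) + p := by
        rw [Complex.star_def, _root_.map_add, hsα, hbp']
      have es1 : star (p - (α:ℂ)) = b - (α:ℂ) := by
        rw [Complex.star_def, _root_.map_sub, hsα, hpb]
      have eM : ∀ i j, (d - q) i j = d i j - q i j := fun i j => rfl
      rw [ev0, ev1, es0, es1, eM, eM, eM, eM, hd00, hd01, hd10, hd11, haα, hq11, ← hb_def, ← hp_def] at hv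
      have e : ((α:ℂ) + p) * ((1 + (α:ℂ) - l*(b + p) - (α:ℂ)) * ((α:ℂ) + b) + (b + c*(α:ℂ)^2 - c*b^2 - b) * (p - (α:ℂ)))
          + (b - (α:ℂ)) * ((p + c*(α:ℂ)^2 - c*p^2 - p) * ((α:ℂ) + b) + (2 - (α:ℂ) + l*(b + p) - (1 - (α:ℂ))) * (p - (α:ℂ)))
          = (((2 - 2*lR)*α : ℝ) : ℂ) := by
        push_cast
        linear_combination (2 - 2*(α:ℂ)*c - 4*(α:ℂ)*l + 2*(α:ℂ)^2*c - 2*b*p*c) * hbp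
          + (-2*(α:ℂ) + 4*(α:ℂ)^2 - 4*(α:ℂ)^3 + 2*p^2*(α:ℂ) + 2*b^2*(α:ℂ)) * hCA
      rw [e] at hv
      have := Complex.zero_le_real.mp hv
      nlinarith [hαpos, hlR_gt]
end
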